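/- arXiv:1403.0362 — 6 statements merged into one kernel-verified Lean document; each statement's English description precedes it below -/
import Mathlib

section
/- Fix an integer m ≥ 2 and a real number B > 0. The set of substitutions σ over an m-letter alphabet whose incidence matrix M_σ is primitive and all of whose complex eigenvalues have modulus at most B is finite, and its cardinality is strictly less than m^(m⁴ · B^(2(m−1)²+2)) (where the exponent is a real number and the power is a real power). -/
open Matrix Polynomial

/-!
If the eigenvalues of an integer matrix `A` have modulus at most `B`, then `tr (A ^ k) ≤ m Bᵏ`.
For primitive `A`, Cayley–Hamilton shows that a positive entry `(A ^ k) j i` already shows up in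
some `A ^ q` with `q < m`, and then `A i j ≤ A i j (A ^ q) j i ≤ (A ^ (q + 1)) i i ≤ m B ^ m`
(primitivity also forces `B ≥ 1`). The word `σ a` has length the `a`-th column sum of `A`, hence
at most `L = ⌊m² Bᵐ⌋`; there are fewer than `m ^ (L + 1)` words of length `≤ L`, so at most
`m ^ ((L + 1) m)` such substitutions.
-/

namespace Matrix

variable {n : Type*} [Fintype n]

theorem apply_le_trace_of_nonneg {R : Type*} [AddCommMonoid R] [PartialOrder R]
    [IsOrderedAddMonoid R] {A : Matrix n n R} (hA : ∀ i, 0 ≤ A i i) (i : n) :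
    A i i ≤ A.trace :=
  Finset.single_le_sum (fun l _ => hA l) (Finset.mem_univ i)

variable [DecidableEq n]

theorem norm_trace_pow_le_of_spectrum (C : Matrix n n ℂ) {B : ℝ}
    (hC : ∀ z ∈ spectrum ℂ C, ‖z‖ ≤ B) (k : ℕ) :
    ‖(C ^ k).trace‖ ≤ Fintype.card n * B ^ k := by
  rcases k.eq_zero_or_pos with rfl | hk
  · simp
  have hroots : ∀ z ∈ (C ^ k).charpoly.roots, ‖z‖ ≤ B ^ k := by
    intro z hz
    rw [mem_roots (charpoly_monic _).ne_zero, ← mem_spectrum_iff_isRoot_charpoly,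
      spectrum.map_pow_of_pos C hk] at hz
    obtain ⟨w, hw, rfl⟩ := hz
    rw [norm_pow]
    exact pow_le_pow_left₀ (norm_nonneg w) (hC w hw) k
  have hcard : (C ^ k).charpoly.roots.card = Fintype.card n := by
    rw [(IsAlgClosed.splits _).natDegree_eq_card_roots.symm, charpoly_natDegree_eq_dim]
  calc ‖(C ^ k).trace‖ = ‖(C ^ k).charpoly.roots.sum‖ := by rw [trace_eq_sum_roots_charpoly]
    _ ≤ ((C ^ k).charpoly.roots.map (‖·‖)).sum := norm_multiset_sum_le _
    _ ≤ ((C ^ k).charpoly.roots.map (‖·‖)).card • B ^ k :=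
      Multiset.sum_le_card_nsmul _ _ (Multiset.forall_mem_map_iff.mpr hroots)
    _ = Fintype.card n * B ^ k := by rw [Multiset.card_map, hcard, nsmul_eq_mul]

theorem trace_pow_le_of_isRoot_charpoly (A : Matrix n n ℤ) {B : ℝ}
    (hA : ∀ z : ℂ, (A.charpoly.map (algebraMap ℤ ℂ)).IsRoot z → ‖z‖ ≤ B) (k : ℕ) :
    ((A ^ k).trace : ℝ) ≤ Fintype.card n * B ^ k := by
  set Aℂ := A.map (algebraMap ℤ ℂ) with hAℂ
  have hC : ∀ z ∈ spectrum ℂ Aℂ, ‖z‖ ≤ B := fun z hz =>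
    hA z (by rwa [mem_spectrum_iff_isRoot_charpoly, charpoly_map] at hz)
  have htrace : (Aℂ ^ k).trace = ((A ^ k).trace : ℂ) := by
    rw [hAℂ, ← RingHom.mapMatrix_apply, ← map_pow, RingHom.mapMatrix_apply]
    exact (AddMonoidHom.map_trace (algebraMap ℤ ℂ) (A ^ k)).symm
  calc ((A ^ k).trace : ℝ) ≤ ‖((A ^ k).trace : ℂ)‖ := by
        rw [Complex.norm_intCast]; exact le_abs_self _
    _ ≤ Fintype.card n * B ^ k := htrace ▸ norm_trace_pow_le_of_spectrum Aℂ hC k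

theorem exists_pow_lt_card_apply_ne_zero {R : Type*} [CommRing R] (A : Matrix n n R)
    {k : ℕ} {i j : n} (h : (A ^ k) i j ≠ 0) : ∃ q < Fintype.card n, (A ^ q) i j ≠ 0 := by
  nontriviality R
  have hdeg : (X ^ k %ₘ A.charpoly).natDegree < Fintype.card n := by
    have : A.charpoly ≠ 1 := fun h1 => by
      simpa [h1] using A.charpoly_natDegree_eq_dim.trans_ne (Fintype.card_pos_iff.mpr ⟨i⟩).ne'
    simpa using natDegree_modByMonic_lt _ A.charpoly_monic this
  by_contra! hzero
  -- Cayley–Hamilton: `A ^ k = p(A)` for `p = X ^ k %ₘ A.charpoly`, of degree `< card n`.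
  rw [pow_eq_aeval_mod_charpoly, aeval_eq_sum_range' hdeg, sum_apply] at h
  exact h (Finset.sum_eq_zero fun q hq => by
    rw [smul_apply, hzero q (Finset.mem_range.mp hq), smul_zero])

theorem exists_pow_lt_card_apply_pos {R : Type*} [CommRing R] [PartialOrder R] [IsOrderedRing R]
    {A : Matrix n n R} (hA : ∀ i j, 0 ≤ A i j) {k : ℕ} {i j : n} (h : 0 < (A ^ k) i j) :
    ∃ q < Fintype.card n, 0 < (A ^ q) i j := by
  obtain ⟨q, hq, hne⟩ := A.exists_pow_lt_card_apply_ne_zero h.ne'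
  exact ⟨q, hq, (pow_apply_nonneg hA q i j).lt_of_ne' hne⟩

theorem IsIrreducible.exists_apply_le_trace_pow {A : Matrix n n ℤ} (hA : A.IsIrreducible)
    (i j : n) : ∃ q < Fintype.card n, A i j ≤ (A ^ (q + 1)).trace := by
  obtain ⟨k, -, hk⟩ := (isIrreducible_iff_exists_pow_pos hA.nonneg).mp hA j i
  obtain ⟨q, hq, hpos⟩ := exists_pow_lt_card_apply_pos hA.nonneg hk
  refine ⟨q, hq, ?_⟩
  have hpow := pow_apply_nonneg hA.nonneg
  calc A i j = A i j * 1 := (mul_one _).symm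
    _ ≤ A i j * (A ^ q) j i := mul_le_mul_of_nonneg_left hpos (hA.nonneg i j)
    _ ≤ ∑ l, A i l * (A ^ q) l i :=
      Finset.single_le_sum (f := fun l => A i l * (A ^ q) l i)
        (fun l _ => mul_nonneg (hA.nonneg i l) (hpow q l i)) (Finset.mem_univ j)
    _ = (A ^ (q + 1)) i i := by rw [pow_succ', mul_apply]
    _ ≤ (A ^ (q + 1)).trace := apply_le_trace_of_nonneg (fun l => hpow _ l l) i

variable {A : Matrix n n ℤ} {B : ℝ}

theorem IsPrimitive.one_le_of_isRoot_charpoly [Nonempty n] (hA : A.IsPrimitive) (hB : 0 ≤ B)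
    (hroots : ∀ z : ℂ, (A.charpoly.map (algebraMap ℤ ℂ)).IsRoot z → ‖z‖ ≤ B) : 1 ≤ B := by
  obtain ⟨k, hk, hpos⟩ := hA.exists_pos_pow
  have htrace : (Fintype.card n : ℤ) ≤ (A ^ k).trace := by
    have := Finset.card_nsmul_le_sum Finset.univ (fun i => (A ^ k) i i) 1 fun i _ => hpos i i
    simpa [trace] using this
  have hcard : (0 : ℝ) < Fintype.card n := by exact_mod_cast Fintype.card_pos
  have : (Fintype.card n : ℝ) * 1 ≤ Fintype.card n * B ^ k :=
    calc (Fintype.card n : ℝ) * 1 = Fintype.card n := mul_one _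
      _ ≤ (A ^ k).trace := by exact_mod_cast htrace
      _ ≤ Fintype.card n * B ^ k := trace_pow_le_of_isRoot_charpoly A hroots k
  exact (one_le_pow_iff_of_nonneg hB hk.ne').mp (le_of_mul_le_mul_left this hcard)

theorem IsPrimitive.apply_le_of_isRoot_charpoly (hA : A.IsPrimitive) (hB : 0 ≤ B)
    (hroots : ∀ z : ℂ, (A.charpoly.map (algebraMap ℤ ℂ)).IsRoot z → ‖z‖ ≤ B) (i j : n) :
    (A i j : ℝ) ≤ Fintype.card n * B ^ Fintype.card n := by
  have : Nonempty n := ⟨i⟩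
  have hB1 := hA.one_le_of_isRoot_charpoly hB hroots
  obtain ⟨q, hq, hle⟩ := hA.isIrreducible.exists_apply_le_trace_pow i j
  calc (A i j : ℝ) ≤ (A ^ (q + 1)).trace := by exact_mod_cast hle
    _ ≤ Fintype.card n * B ^ (q + 1) := trace_pow_le_of_isRoot_charpoly A hroots _
    _ ≤ Fintype.card n * B ^ Fintype.card n :=
      mul_le_mul_of_nonneg_left (pow_le_pow_right₀ hB1 hq) (Nat.cast_nonneg _)

end Matrix

section Words

variable (α : Type*) [Fintype α] [DecidableEq α]

def listsLengthLE (L : ℕ) : Finset (List α) :=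
  (Finset.range (L + 1)).biUnion fun k =>
    (Finset.univ : Finset (List.Vector α k)).map ⟨List.Vector.toList, List.Vector.toList_injective⟩

variable {α}

theorem mem_listsLengthLE {L : ℕ} {l : List α} : l ∈ listsLengthLE α L ↔ l.length ≤ L := by
  simp only [listsLengthLE, Finset.mem_biUnion, Finset.mem_range, Finset.mem_map,
    Finset.mem_univ, true_and, Function.Embedding.coeFn_mk, Nat.lt_succ_iff]
  exact ⟨fun ⟨k, hk, v, hv⟩ => hv ▸ v.toList_length.trans_le hk, fun h => ⟨_, h, ⟨l, rfl⟩, rfl⟩⟩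

theorem card_listsLengthLE_lt (hα : 2 ≤ Fintype.card α) (L : ℕ) :
    (listsLengthLE α L).card < Fintype.card α ^ (L + 1) :=
  calc (listsLengthLE α L).card ≤ ∑ k ∈ Finset.range (L + 1), Fintype.card α ^ k := by
        refine Finset.card_biUnion_le.trans (Finset.sum_le_sum fun k _ => ?_)
        rw [Finset.card_map, Finset.card_univ]
        exact (card_vector k).le
    _ < Fintype.card α ^ (L + 1) := Nat.geomSum_lt hα fun k hk => Finset.mem_range.mp hk

theorem finite_and_ncard_le_of_forall_length_le (hα : 2 ≤ Fintype.card α) {L : ℕ}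
    {S : Set (α → List α)} (hS : ∀ σ ∈ S, ∀ a, (σ a).length ≤ L) :
    S.Finite ∧ S.ncard ≤ Fintype.card α ^ ((L + 1) * Fintype.card α) := by
  have hsub : S ⊆ ↑(Fintype.piFinset fun _ : α => listsLengthLE α L) := fun σ hσ => by
    simpa [mem_listsLengthLE] using hS σ hσ
  refine ⟨(Finset.finite_toSet _).subset hsub, ?_⟩
  calc S.ncard ≤ (Fintype.piFinset fun _ : α => listsLengthLE α L).card :=
        (Set.ncard_le_ncard hsub).trans (Set.ncard_coe_finset _).le
    _ ≤ Fintype.card α ^ ((L + 1) * Fintype.card α) := by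
        rw [Fintype.card_piFinset, Finset.prod_const, Finset.card_univ, pow_mul]
        exact Nat.pow_le_pow_left (card_listsLengthLE_lt hα L).le _

end Words

section Substitution

variable {α : Type*} [DecidableEq α]

def incidenceMatrix (σ : α → List α) : Matrix α α ℤ :=
  Matrix.of fun i j => ((σ j).count i : ℤ)

theorem incidenceMatrix_nonneg (σ : α → List α) (i j : α) : 0 ≤ incidenceMatrix σ i j :=
  Int.natCast_nonneg _

theorem sum_incidenceMatrix_apply [Fintype α] (σ : α → List α) (a : α) :
    ∑ i, incidenceMatrix σ i a = (σ a).length := by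
  have := Multiset.sum_count_eq_card (s := Finset.univ) (m := (σ a : Multiset α))
    fun x _ => Finset.mem_univ x
  simp only [Multiset.coe_count, Multiset.coe_card] at this
  simp only [incidenceMatrix, of_apply]
  exact_mod_cast this

theorem length_le_of_isPrimitive_incidenceMatrix [Fintype α] {σ : α → List α} {B : ℝ}
    (hσ : (incidenceMatrix σ).IsPrimitive) (hB : 0 ≤ B)
    (hroots : ∀ z : ℂ, ((incidenceMatrix σ).charpoly.map (algebraMap ℤ ℂ)).IsRoot z → ‖z‖ ≤ B)
    (a : α) : ((σ a).length : ℝ) ≤ Fintype.card α ^ 2 * B ^ Fintype.card α :=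
  calc ((σ a).length : ℝ) = ∑ i, (incidenceMatrix σ i a : ℝ) := by
        exact_mod_cast (sum_incidenceMatrix_apply σ a).symm
    _ ≤ ∑ _i : α, Fintype.card α * B ^ Fintype.card α :=
        Finset.sum_le_sum fun i _ => hσ.apply_le_of_isRoot_charpoly hB hroots i a
    _ = Fintype.card α ^ 2 * B ^ Fintype.card α := by
        rw [Finset.sum_const, Finset.card_univ, nsmul_eq_mul]; ring

end Substitution

theorem add_one_mul_lt_pow_four_mul_pow {m L : ℕ} (hm : 2 ≤ m) {B : ℝ} (hB : 1 ≤ B)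
    (hL : (L : ℝ) ≤ m ^ 2 * B ^ m) :
    ((L + 1) * m : ℝ) < m ^ 4 * B ^ (2 * (m - 1) ^ 2 + 2) := by
  set b := B ^ (2 * (m - 1) ^ 2 + 2)
  have hb : B ^ m ≤ b := by
    refine pow_le_pow_right₀ hB ?_
    have := Nat.le_self_pow two_ne_zero (m - 1)
    omega
  have hb1 : 1 ≤ b := one_le_pow₀ hB
  have hm2 : (2 : ℝ) ≤ m := by exact_mod_cast hm
  have hLb : (L + 1) * (m : ℝ) ≤ m ^ 3 * b + m := by
    nlinarith [mul_le_mul_of_nonneg_left hb (by positivity : (0 : ℝ) ≤ m ^ 2)]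
  have hmb : (m : ℝ) < m ^ 3 * b := by
    have : (m : ℝ) < m ^ 3 := by nlinarith
    nlinarith
  have hm4 : 2 * (m : ℝ) ^ 3 * b ≤ m ^ 4 * b := by nlinarith
  linarith

/-- The set of primitive substitutions over `m` letters whose incidence matrix has all
complex eigenvalues of modulus at most `B` is finite, of cardinality less than
`m ^ (m^4 * B^(2*(m-1)^2+2))`. -/
theorem stmt_0 (m : ℕ) (hm : 2 ≤ m) (B : ℝ) (hB : 0 < B)
    (S : Set (Fin m → List (Fin m)))
    (hS : S = {σ : Fin m → List (Fin m) |
      (∀ a, σ a ≠ []) ∧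
      (∃ k : ℕ, 0 < k ∧ ∀ i j,
        0 < (((Matrix.of fun (i j : Fin m) => ((σ j).count i : ℤ)) ^ k) i j)) ∧
      (∀ z : ℂ,
        ((Matrix.of fun (i j : Fin m) => ((σ j).count i : ℤ)).charpoly.map
          (algebraMap ℤ ℂ)).IsRoot z → ‖z‖ ≤ B)}) :
    S.Finite ∧
      (S.ncard : ℝ) < (m : ℝ) ^ ((m : ℝ) ^ 4 * B ^ (2 * (m - 1) ^ 2 + 2)) := by
  have hmem : ∀ σ ∈ S, (incidenceMatrix σ).IsPrimitive ∧
      ∀ z : ℂ, ((incidenceMatrix σ).charpoly.map (algebraMap ℤ ℂ)).IsRoot z → ‖z‖ ≤ B := by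
    rw [hS]
    rintro σ ⟨-, hpow, hroots⟩
    exact ⟨⟨incidenceMatrix_nonneg σ, hpow⟩, hroots⟩
  rcases S.eq_empty_or_nonempty with rfl | ⟨σ₀, hσ₀⟩
  · simpa using Real.rpow_pos_of_pos (by positivity : (0 : ℝ) < m) _
  have : NeZero m := ⟨by omega⟩
  have hB1 : 1 ≤ B := (hmem σ₀ hσ₀).1.one_le_of_isRoot_charpoly hB.le (hmem σ₀ hσ₀).2
  set L := ⌊(m : ℝ) ^ 2 * B ^ m⌋₊
  have hlen : ∀ σ ∈ S, ∀ a, (σ a).length ≤ L := fun σ hσ a => Nat.le_floor <| by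
    simpa using length_le_of_isPrimitive_incidenceMatrix (hmem σ hσ).1 hB.le (hmem σ hσ).2 a
  obtain ⟨hfin, hcard⟩ :=
    finite_and_ncard_le_of_forall_length_le (by simpa using hm) hlen
  refine ⟨hfin, ?_⟩
  calc (S.ncard : ℝ) ≤ (m : ℝ) ^ (((L + 1) * m : ℕ) : ℝ) := by
        rw [Real.rpow_natCast]
        exact_mod_cast (by simpa using hcard)
    _ < (m : ℝ) ^ ((m : ℝ) ^ 4 * B ^ (2 * (m - 1) ^ 2 + 2)) := by
        rw [Real.rpow_lt_rpow_left_iff (by exact_mod_cast hm)]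
        push_cast
        exact add_one_mul_lt_pow_four_mul_pow hm hB1 (Nat.floor_le (by positivity))
end

section
/- Let m ≥ 1 and let A be an m×m matrix with strictly positive integer entries such that every complex eigenvalue of A has modulus at most R (R a real number). Then every entry of A is at most m²·R². -/
open Matrix Polynomial

/-!
For a matrix with entries `≥ 1` every entry satisfies `aᵢⱼ ≤ aᵢⱼ aⱼᵢ ≤ tr (A²)`.
Over `ℂ`, `tr (A²)` is the sum of the squares of the eigenvalues, since by spectral mapping
the eigenvalues of `A²` are the squares of those of `A`; hence `tr (A²) ≤ m R² ≤ m² R²`.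
-/

namespace Matrix

variable {n : Type*} [Fintype n]

lemma entry_le_trace_mul_self {α : Type*} [Semiring α] [PartialOrder α] [IsOrderedRing α]
    {A : Matrix n n α} (hA : ∀ i j, 1 ≤ A i j) (i j : n) : A i j ≤ (A * A).trace := by
  have hnonneg : ∀ i j, 0 ≤ A i j := fun i j ↦ zero_le_one.trans (hA i j)
  have hdiag : ∀ k, 0 ≤ (A * A) k k := fun k ↦
    Finset.sum_nonneg fun l _ ↦ mul_nonneg (hnonneg k l) (hnonneg l k)
  calc A i j ≤ A i j * A j i := le_mul_of_one_le_right (hnonneg i j) (hA j i)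
    _ ≤ (A * A) i i :=
      Finset.single_le_sum (f := fun l ↦ A i l * A l i)
        (fun l _ ↦ mul_nonneg (hnonneg i l) (hnonneg l i)) (Finset.mem_univ j)
    _ ≤ (A * A).trace :=
      Finset.single_le_sum (f := fun k ↦ (A * A) k k) (fun k _ ↦ hdiag k) (Finset.mem_univ i)

section Eigenvalues

variable [DecidableEq n] {K : Type*} [NormedField K] [IsAlgClosed K]

lemma norm_le_pow_of_isRoot_charpoly_pow {B : Matrix n n K} {R : ℝ}
    (hB : ∀ z, B.charpoly.IsRoot z → ‖z‖ ≤ R) {k : ℕ} (hk : 0 < k) {μ : K}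
    (hμ : (B ^ k).charpoly.IsRoot μ) : ‖μ‖ ≤ R ^ k := by
  rw [← mem_spectrum_iff_isRoot_charpoly, spectrum.map_pow_of_pos B hk] at hμ
  obtain ⟨z, hz, rfl⟩ := hμ
  rw [norm_pow]
  exact pow_le_pow_left₀ (norm_nonneg z) (hB z (mem_spectrum_iff_isRoot_charpoly.mp hz)) k

lemma norm_trace_le_card_mul {B : Matrix n n K} {R : ℝ}
    (hB : ∀ z, B.charpoly.IsRoot z → ‖z‖ ≤ R) : ‖B.trace‖ ≤ Fintype.card n * R := by
  have hcard : Multiset.card B.charpoly.roots = Fintype.card n := by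
    rw [splits_iff_card_roots.mp (IsAlgClosed.splits B.charpoly), charpoly_natDegree_eq_dim]
  calc ‖B.trace‖ = ‖B.charpoly.roots.sum‖ := by rw [trace_eq_sum_roots_charpoly]
    _ ≤ (B.charpoly.roots.map (‖·‖)).sum := norm_multiset_sum_le _
    _ ≤ Multiset.card (B.charpoly.roots.map (‖·‖)) • R := by
      refine Multiset.sum_le_card_nsmul _ _ fun x hx ↦ ?_
      obtain ⟨z, hz, rfl⟩ := Multiset.mem_map.mp hx
      exact hB z (isRoot_of_mem_roots hz)
    _ = Fintype.card n * R := by rw [Multiset.card_map, hcard, nsmul_eq_mul]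

end Eigenvalues

end Matrix

theorem stmt_1_general (m : ℕ) (R : ℝ) (A : Matrix (Fin m) (Fin m) ℤ)
    (hpos : ∀ i j, 1 ≤ A i j)
    (heig : ∀ z : ℂ, (A.charpoly.map (algebraMap ℤ ℂ)).IsRoot z →
      ‖z‖ ≤ R) :
    ∀ i j, (A i j : ℝ) ≤ (m : ℝ) ^ 2 * R ^ 2 := by
  intro i j
  set B : Matrix (Fin m) (Fin m) ℂ := A.map (algebraMap ℤ ℂ)
  have heigB : ∀ z, B.charpoly.IsRoot z → ‖z‖ ≤ R := by rwa [charpoly_map]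
  have htrace : ‖(B ^ 2).trace‖ ≤ m * R ^ 2 := by
    simpa using norm_trace_le_card_mul fun μ ↦ norm_le_pow_of_isRoot_charpoly_pow heigB two_pos
  have hcast : (B ^ 2).trace = ((A * A).trace : ℂ) := by
    simp only [B, sq, ← Matrix.map_mul]
    exact (AddMonoidHom.map_trace (Int.castAddHom ℂ) _).symm
  have hm : (m : ℝ) ≤ m ^ 2 := mod_cast Nat.le_self_pow two_ne_zero m
  calc (A i j : ℝ) ≤ ((A * A).trace : ℤ) := mod_cast entry_le_trace_mul_self hpos i j
    _ ≤ ‖(B ^ 2).trace‖ := by rw [hcast, Complex.norm_intCast]; exact le_abs_self _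
    _ ≤ m * R ^ 2 := htrace
    _ ≤ m ^ 2 * R ^ 2 := by gcongr

/-- If an `m × m` matrix with strictly positive integer entries has all complex
eigenvalues of modulus at most `R`, then every entry is at most `m² R²`. -/
theorem stmt_1 (m : ℕ) (hm : 1 ≤ m) (R : ℝ) (A : Matrix (Fin m) (Fin m) ℤ)
    (hpos : ∀ i j, 1 ≤ A i j)
    (heig : ∀ z : ℂ, (A.charpoly.map (algebraMap ℤ ℂ)).IsRoot z →
      ‖z‖ ≤ R) :
    ∀ i j, (A i j : ℝ) ≤ (m : ℝ) ^ 2 * R ^ 2 :=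
  stmt_1_general m R A hpos heig
end

section
/- Let M be the 3×3 matrix with nonnegative integer entries M = [[k1, a, b], [c, k2, d], [e, f, k3]], and suppose that none of the six pairs (a,b), (c,d), (e,f), (c,e), (a,f), (b,d) equals (0,0). Write the characteristic polynomial of M as x³ − p x² − q x − r with integers p, q, r. Then each of a, b, c, d, e, f is at most L, where L = max{ q + k1·k2 + k2·k3 + k3·k1 , r − k1·k2·k3 + max{k1,k2,k3} · (q + k1·k2 + k2·k3 + k1·k3) }. -/
open Matrix Polynomial

/-- Entry bound for a nonnegative integer `3 × 3` matrix with characteristic polynomial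
`x³ - p x² - q x - r`, under the nondegeneracy condition that none of the six pairs
`(a,b), (c,d), (e,f), (c,e), (a,f), (b,d)` is `(0,0)`. -/
theorem stmt_5 (k1 k2 k3 a b c d e f p q r : ℤ)
    (hk1 : 0 ≤ k1) (hk2 : 0 ≤ k2) (hk3 : 0 ≤ k3)
    (ha : 0 ≤ a) (hb : 0 ≤ b) (hc : 0 ≤ c) (hd : 0 ≤ d) (he : 0 ≤ e) (hf : 0 ≤ f)
    (hab : ¬(a = 0 ∧ b = 0)) (hcd : ¬(c = 0 ∧ d = 0)) (hef : ¬(e = 0 ∧ f = 0))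
    (hce : ¬(c = 0 ∧ e = 0)) (haf : ¬(a = 0 ∧ f = 0)) (hbd : ¬(b = 0 ∧ d = 0))
    (hchar : (!![k1, a, b; c, k2, d; e, f, k3]).charpoly =
      X ^ 3 - C p * X ^ 2 - C q * X - C r) :
    a ≤ max (q + k1 * k2 + k2 * k3 + k3 * k1)
          (r - k1 * k2 * k3 + max k1 (max k2 k3) * (q + k1 * k2 + k2 * k3 + k1 * k3)) ∧
    b ≤ max (q + k1 * k2 + k2 * k3 + k3 * k1)
          (r - k1 * k2 * k3 + max k1 (max k2 k3) * (q + k1 * k2 + k2 * k3 + k1 * k3)) ∧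
    c ≤ max (q + k1 * k2 + k2 * k3 + k3 * k1)
          (r - k1 * k2 * k3 + max k1 (max k2 k3) * (q + k1 * k2 + k2 * k3 + k1 * k3)) ∧
    d ≤ max (q + k1 * k2 + k2 * k3 + k3 * k1)
          (r - k1 * k2 * k3 + max k1 (max k2 k3) * (q + k1 * k2 + k2 * k3 + k1 * k3)) ∧
    e ≤ max (q + k1 * k2 + k2 * k3 + k3 * k1)
          (r - k1 * k2 * k3 + max k1 (max k2 k3) * (q + k1 * k2 + k2 * k3 + k1 * k3)) ∧
    f ≤ max (q + k1 * k2 + k2 * k3 + k3 * k1)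
          (r - k1 * k2 * k3 + max k1 (max k2 k3) * (q + k1 * k2 + k2 * k3 + k1 * k3)) := by
  -- Extract the coefficient identities from the characteristic polynomial.
  have h : (!![k1, a, b; c, k2, d; e, f, k3]).charpoly =
      X^3 - C (k1+k2+k3) * X^2 + C (k1*k2+k1*k3+k2*k3 - a*c - b*e - d*f) * X
        - C (k1*k2*k3 - k1*d*f - a*c*k3 + a*d*e + b*c*f - b*k2*e) := by
    rw [Matrix.charpoly, Matrix.det_fin_three]
    simp [charmatrix_apply, Matrix.diagonal]
    ring
  rw [h] at hchar
  have h0 := congrArg (fun P => Polynomial.eval 0 P) hchar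
  have h1 := congrArg (fun P => Polynomial.eval 1 P) hchar
  have h2 := congrArg (fun P => Polynomial.eval (-1) P) hchar
  simp at h0 h1 h2
  have hq : q = a*c + b*e + d*f - k1*k2 - k2*k3 - k3*k1 := by linarith
  have hr : r = k1*k2*k3 - k1*d*f - a*c*k3 + a*d*e + b*c*f - b*k2*e := by linarith
  clear hchar h h0 h1 h2
  subst hq hr
  obtain ⟨K, hKd, hK1, hK2, hK3⟩ : ∃ K : ℤ, K = max k1 (max k2 k3) ∧ k1 ≤ K ∧ k2 ≤ K ∧ k3 ≤ K :=
    ⟨max k1 (max k2 k3), rfl, le_max_left _ _,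
      le_trans (le_max_left _ _) (le_max_right _ _),
      le_trans (le_max_right _ _) (le_max_right _ _)⟩
  rw [← hKd]
  have hQac : a*c ≤ a*c + b*e + d*f - k1*k2 - k2*k3 - k3*k1 + k1 * k2 + k2 * k3 + k3 * k1 := by
    nlinarith [mul_nonneg hb he, mul_nonneg hd hf]
  have hQbe : b*e ≤ a*c + b*e + d*f - k1*k2 - k2*k3 - k3*k1 + k1 * k2 + k2 * k3 + k3 * k1 := by
    nlinarith [mul_nonneg ha hc, mul_nonneg hd hf]
  have hQdf : d*f ≤ a*c + b*e + d*f - k1*k2 - k2*k3 - k3*k1 + k1 * k2 + k2 * k3 + k3 * k1 := by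
    nlinarith [mul_nonneg ha hc, mul_nonneg hb he]
  have key : k1*k2*k3 - k1*d*f - a*c*k3 + a*d*e + b*c*f - b*k2*e - k1 * k2 * k3 +
      K * (a*c + b*e + d*f - k1*k2 - k2*k3 - k3*k1 + k1 * k2 + k2 * k3 + k1 * k3) =
      a*d*e + b*c*f + (K-k1)*(d*f) + (K-k3)*(a*c) + (K-k2)*(b*e) := by ring
  have hade : a*d*e ≤ k1*k2*k3 - k1*d*f - a*c*k3 + a*d*e + b*c*f - b*k2*e - k1 * k2 * k3 +
      K * (a*c + b*e + d*f - k1*k2 - k2*k3 - k3*k1 + k1 * k2 + k2 * k3 + k1 * k3) := by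
    rw [key]
    nlinarith [mul_nonneg (sub_nonneg.2 hK1) (mul_nonneg hd hf),
      mul_nonneg (sub_nonneg.2 hK3) (mul_nonneg ha hc),
      mul_nonneg (sub_nonneg.2 hK2) (mul_nonneg hb he),
      mul_nonneg (mul_nonneg hb hc) hf]
  have hbcf : b*c*f ≤ k1*k2*k3 - k1*d*f - a*c*k3 + a*d*e + b*c*f - b*k2*e - k1 * k2 * k3 +
      K * (a*c + b*e + d*f - k1*k2 - k2*k3 - k3*k1 + k1 * k2 + k2 * k3 + k1 * k3) := by
    rw [key]
    nlinarith [mul_nonneg (sub_nonneg.2 hK1) (mul_nonneg hd hf),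
      mul_nonneg (sub_nonneg.2 hK3) (mul_nonneg ha hc),
      mul_nonneg (sub_nonneg.2 hK2) (mul_nonneg hb he),
      mul_nonneg (mul_nonneg ha hd) he]
  push_neg at hab hcd hef hce haf hbd
  refine ⟨?_, ?_, ?_, ?_, ?_, ?_⟩
  · rcases lt_or_eq_of_le hc with hc' | hc'
    · have := le_mul_of_one_le_right ha hc'
      exact le_max_of_le_left (by linarith)
    · have hd' : (1:ℤ) ≤ d := lt_of_le_of_ne hd (fun h => hcd hc'.symm h.symm)
      have he' : (1:ℤ) ≤ e := lt_of_le_of_ne he (fun h => hce hc'.symm h.symm)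
      have h1 : (1:ℤ) ≤ d * e := one_le_mul_of_one_le_of_one_le hd' he'
      have h2 : a ≤ a * (d * e) := le_mul_of_one_le_right ha h1
      have h3 : a * (d * e) = a*d*e := by ring
      exact le_max_of_le_right (by linarith)
  · rcases lt_or_eq_of_le he with he' | he'
    · have := le_mul_of_one_le_right hb he'
      exact le_max_of_le_left (by linarith)
    · have hc' : (1:ℤ) ≤ c := lt_of_le_of_ne hc (fun h => hce h.symm he'.symm)
      have hf' : (1:ℤ) ≤ f := lt_of_le_of_ne hf (fun h => hef he'.symm h.symm)
      have h1 : (1:ℤ) ≤ c * f := one_le_mul_of_one_le_of_one_le hc' hf'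
      have h2 : b ≤ b * (c * f) := le_mul_of_one_le_right hb h1
      have h3 : b * (c * f) = b*c*f := by ring
      exact le_max_of_le_right (by linarith)
  · rcases lt_or_eq_of_le ha with ha' | ha'
    · have := le_mul_of_one_le_left hc ha'
      exact le_max_of_le_left (by linarith)
    · have hb' : (1:ℤ) ≤ b := lt_of_le_of_ne hb (fun h => hab ha'.symm h.symm)
      have hf' : (1:ℤ) ≤ f := lt_of_le_of_ne hf (fun h => haf ha'.symm h.symm)
      have h1 : (1:ℤ) ≤ b * f := one_le_mul_of_one_le_of_one_le hb' hf'
      have h2 : c ≤ c * (b * f) := le_mul_of_one_le_right hc h1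
      have h3 : c * (b * f) = b*c*f := by ring
      exact le_max_of_le_right (by linarith)
  · rcases lt_or_eq_of_le hf with hf' | hf'
    · have := le_mul_of_one_le_right hd hf'
      exact le_max_of_le_left (by linarith)
    · have ha' : (1:ℤ) ≤ a := lt_of_le_of_ne ha (fun h => haf h.symm hf'.symm)
      have he' : (1:ℤ) ≤ e := lt_of_le_of_ne he (fun h => hef h.symm hf'.symm)
      have h1 : (1:ℤ) ≤ a * e := one_le_mul_of_one_le_of_one_le ha' he'
      have h2 : d ≤ d * (a * e) := le_mul_of_one_le_right hd h1
      have h3 : d * (a * e) = a*d*e := by ring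
      exact le_max_of_le_right (by linarith)
  · rcases lt_or_eq_of_le hb with hb' | hb'
    · have := le_mul_of_one_le_left he hb'
      exact le_max_of_le_left (by linarith)
    · have ha' : (1:ℤ) ≤ a := lt_of_le_of_ne ha (fun h => hab h.symm hb'.symm)
      have hd' : (1:ℤ) ≤ d := lt_of_le_of_ne hd (fun h => hbd hb'.symm h.symm)
      have h1 : (1:ℤ) ≤ a * d := one_le_mul_of_one_le_of_one_le ha' hd'
      have h2 : e ≤ e * (a * d) := le_mul_of_one_le_right he h1
      have h3 : e * (a * d) = a*d*e := by ring
      exact le_max_of_le_right (by linarith)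
  · rcases lt_or_eq_of_le hd with hd' | hd'
    · have := le_mul_of_one_le_left hf hd'
      exact le_max_of_le_left (by linarith)
    · have hb' : (1:ℤ) ≤ b := lt_of_le_of_ne hb (fun h => hbd h.symm hd'.symm)
      have hc' : (1:ℤ) ≤ c := lt_of_le_of_ne hc (fun h => hcd h.symm hd'.symm)
      have h1 : (1:ℤ) ≤ b * c := one_le_mul_of_one_le_of_one_le hb' hc'
      have h2 : f ≤ f * (b * c) := le_mul_of_one_le_right hf h1
      have h3 : f * (b * c) = b*c*f := by ring
      exact le_max_of_le_right (by linarith)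
end

section
/- Let p, q, r be integers with p ≥ 0, q ≥ 0, r ≥ 1 and (p,q) ≠ (0,0). Suppose the polynomial f(x) = x³ − p x² + q x + r has no complex root of modulus exactly 1. Then f has exactly one complex root (counted with multiplicity) of modulus strictly less than 1 if and only if |p − r| < q + 1. -/
open Polynomial ComplexConjugate

/-!
Put `A = f(1) = 1 - p + q + r` and `B = -f(-1) = 1 + p + q - r`. Since `A + B = 2(q + 1) > 0`,
the condition `|p - r| < q + 1`, i.e. `A, B > 0`, is equivalent to `A * B > 0`, and
`A * B = ∏ (1 - z²)` over the roots. A real root contributes a factor that is positive exactly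
when `|z| < 1` and a conjugate pair contributes `|1 - z²|² > 0`, so `A * B > 0` iff an even
number of real roots lie outside the unit disc. As `|z₁ z₂ z₃| = r ≥ 1`, not all roots lie
inside, and this parity condition becomes: exactly one root inside. For a pair `z, z̄` with real
root `t`, `|t| < 1` forces `|z|² = r / |t| > 1`.
-/

theorem mul_pos_iff_of_ne_zero {α : Type*} [Ring α] [LinearOrder α] [IsStrictOrderedRing α]
    {a b : α} (ha : a ≠ 0) (hb : b ≠ 0) : 0 < a * b ↔ (0 < a ↔ 0 < b) := by
  rw [mul_pos_iff]
  rcases ha.lt_or_gt with ha | ha <;> rcases hb.lt_or_gt with hb | hb <;>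
    simp [ha, hb, ha.not_gt, hb.not_gt]

theorem mul_pos_iff_of_add_pos {α : Type*} [Ring α] [LinearOrder α] [IsStrictOrderedRing α]
    {a b : α} (hab : 0 < a + b) : 0 < a * b ↔ 0 < a ∧ 0 < b := by
  refine ⟨fun h => ?_, fun h => mul_pos h.1 h.2⟩
  rcases mul_pos_iff.mp h with h | h
  · exact h
  · exact (lt_asymm hab (add_neg h.1 h.2)).elim

theorem one_sub_sq_pos_iff_abs_lt_one {x : ℝ} : 0 < 1 - x ^ 2 ↔ |x| < 1 := by
  rw [sub_pos, sq_lt_one_iff_abs_lt_one]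

theorem card_filter_abs_lt_one_eq_one_iff {u v w : ℝ} (huvw : 1 ≤ |u * v * w|)
    (hu : |u| ≠ 1) (hv : |v| ≠ 1) (hw : |w| ≠ 1) :
    Multiset.card (({u, v, w} : Multiset ℝ).filter (|·| < 1)) = 1 ↔
      0 < (1 - u ^ 2) * (1 - v ^ 2) * (1 - w ^ 2) := by
  have hne : ∀ x : ℝ, |x| ≠ 1 → 1 - x ^ 2 ≠ 0 := fun x hx h => hx <| by
    rw [← abs_one, ← sq_eq_sq_iff_abs_eq_abs]; linarith
  have not_all_inside : ¬(|u| < 1 ∧ |v| < 1 ∧ |w| < 1) := by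
    rintro ⟨hu, hv, hw⟩
    rw [abs_mul, abs_mul] at huvw
    have := mul_lt_one_of_nonneg_of_lt_one_left (by positivity)
      (mul_lt_one_of_nonneg_of_lt_one_left (abs_nonneg u) hu hv.le) hw.le
    linarith
  rw [mul_pos_iff_of_ne_zero (mul_ne_zero (hne u hu) (hne v hv)) (hne w hw),
    mul_pos_iff_of_ne_zero (hne u hu) (hne v hv), one_sub_sq_pos_iff_abs_lt_one,
    one_sub_sq_pos_iff_abs_lt_one, one_sub_sq_pos_iff_abs_lt_one]
  by_cases hu' : |u| < 1 <;> by_cases hv' : |v| < 1 <;> by_cases hw' : |w| < 1 <;>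
    simp [Multiset.filter_singleton, hu', hv', hw'] at not_all_inside ⊢

theorem card_filter_norm_lt_one_conj_pair_eq_one_iff {z : ℂ} {t : ℝ}
    (hzt : 1 ≤ Complex.normSq z * |t|) :
    Multiset.card (({z, conj z, (t : ℂ)} : Multiset ℂ).filter (‖·‖ < 1)) = 1 ↔ |t| < 1 := by
  have hz_out : |t| < 1 → 1 < ‖z‖ := by
    intro ht
    rw [← Complex.sq_norm] at hzt
    by_contra! h
    have : ‖z‖ ^ 2 ≤ 1 := pow_le_one₀ (norm_nonneg z) h
    nlinarith [abs_nonneg t]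
  by_cases ht : |t| < 1 <;> by_cases hz' : ‖z‖ < 1 <;>
    simp [Multiset.filter_singleton, ht, hz', Complex.norm_real]
  linarith [hz_out ht]

theorem Multiset.exists_ofReal_triple_or_conj_pair {s : Multiset ℂ} (hs : Multiset.card s = 3)
    (hconj : s.map conj = s) :
    (∃ u v w : ℝ, s = {(u : ℂ), (v : ℂ), (w : ℂ)}) ∨
      ∃ (z : ℂ) (t : ℝ), s = {z, conj z, (t : ℂ)} := by
  by_cases hreal : ∀ z ∈ s, conj z = z
  · left
    obtain ⟨u, v, w, huvw⟩ := Multiset.card_eq_three.mp ((s.card_map Complex.re).trans hs)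
    refine ⟨u, v, w, ?_⟩
    have hs_re : s = (s.map Complex.re).map ((↑) : ℝ → ℂ) := by
      rw [Multiset.map_map]
      conv_lhs => rw [← Multiset.map_id s]
      exact Multiset.map_congr rfl fun z hz => (Complex.conj_eq_iff_re.mp (hreal z hz)).symm
    rw [hs_re, huvw]
    rfl
  · right
    push Not at hreal
    obtain ⟨z, hz, hzc⟩ := hreal
    have hcz : conj z ∈ s.erase z :=
      (Multiset.mem_erase_of_ne hzc).mpr (hconj ▸ Multiset.mem_map_of_mem _ hz)
    have hcard : Multiset.card ((s.erase z).erase (conj z)) = 1 := by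
      rw [Multiset.card_erase_of_mem hcz, Multiset.card_erase_of_mem hz, hs]; rfl
    obtain ⟨t, ht⟩ := Multiset.card_eq_one.mp hcard
    have hs' : s = {z, conj z, t} := by
      rw [← Multiset.cons_erase hz, ← Multiset.cons_erase hcz, ht]; rfl
    have htc : conj t = t := by
      rw [hs'] at hconj
      simpa [Multiset.cons_swap] using hconj
    exact ⟨z, t.re, by rw [hs', Complex.conj_eq_iff_re.mp htc]⟩

theorem card_filter_norm_lt_one_eq_one_iff_of_card_eq_three {s : Multiset ℂ}
    (hs : Multiset.card s = 3) (hconj : s.map conj = s) (hprod : 1 ≤ ‖s.prod‖)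
    (hcirc : ∀ z ∈ s, ‖z‖ ≠ 1) :
    Multiset.card (s.filter (‖·‖ < 1)) = 1 ↔ 0 < ((s.map fun z => 1 - z ^ 2).prod).re := by
  rcases Multiset.exists_ofReal_triple_or_conj_pair hs hconj with ⟨u, v, w, rfl⟩ | ⟨z, t, rfl⟩
  · obtain ⟨hu, hv, hw⟩ : |u| ≠ 1 ∧ |v| ≠ 1 ∧ |w| ≠ 1 := by simpa using hcirc
    have huvw : 1 ≤ |u * v * w| := by simpa [abs_mul, mul_assoc] using hprod
    have hre : ((({(u : ℂ), (v : ℂ), (w : ℂ)} : Multiset ℂ).map fun z => 1 - z ^ 2).prod).re =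
        (1 - u ^ 2) * (1 - v ^ 2) * (1 - w ^ 2) := by
      simp only [Multiset.insert_eq_cons, Multiset.map_cons, Multiset.prod_cons,
        Multiset.map_singleton, Multiset.prod_singleton]
      norm_cast
      ring
    have hmap : ({(u : ℂ), (v : ℂ), (w : ℂ)} : Multiset ℂ) = ({u, v, w} : Multiset ℝ).map (↑) := by
      simp
    rw [hre, ← card_filter_abs_lt_one_eq_one_iff huvw hu hv hw, hmap, Multiset.filter_map,
      Multiset.card_map]
    simp
  · obtain ⟨hz, ht⟩ : ‖z‖ ≠ 1 ∧ |t| ≠ 1 := by simpa using hcirc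
    have hzt : 1 ≤ Complex.normSq z * |t| := by
      simpa [Complex.normSq_eq_norm_sq, sq, mul_assoc] using hprod
    have hre : ((({z, conj z, (t : ℂ)} : Multiset ℂ).map fun z => 1 - z ^ 2).prod).re =
        Complex.normSq (1 - z ^ 2) * (1 - t ^ 2) := by
      have h : ((({z, conj z, (t : ℂ)} : Multiset ℂ).map fun z => 1 - z ^ 2).prod) =
          (1 - z ^ 2) * conj (1 - z ^ 2) * (1 - (t : ℂ) ^ 2) := by
        simp [mul_assoc]
      rw [h, Complex.mul_conj]
      norm_cast
    have hz2 : 1 - z ^ 2 ≠ 0 := fun h => hz <| by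
      rw [← pow_eq_one_iff_of_nonneg (norm_nonneg z) two_ne_zero, ← norm_pow,
        ← sub_eq_zero.mp h, norm_one]
    rw [hre, mul_pos_iff_of_pos_left (Complex.normSq_pos.mpr hz2), one_sub_sq_pos_iff_abs_lt_one]
    exact card_filter_norm_lt_one_conj_pair_eq_one_iff hzt

theorem Polynomial.Splits.prod_roots_one_sub_sq_of_monic {R : Type*} [CommRing R] [IsDomain R]
    {f : R[X]} (hf : f.Splits) (hm : f.Monic) :
    (f.roots.map fun z => 1 - z ^ 2).prod = (-1) ^ f.natDegree * (f.eval 1 * f.eval (-1)) := by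
  have heval (x : R) : f.eval x = (f.roots.map (x - ·)).prod := by
    simpa [hm.leadingCoeff] using hf.eval_eq_prod_roots x
  have hneg : (f.roots.map (-1 - ·)).prod = (-1) ^ f.natDegree * (f.roots.map (1 + ·)).prod := by
    rw [show (fun z : R => -1 - z) = Neg.neg ∘ (1 + ·) by
        ext; simp only [Function.comp_apply]; ring,
      ← Multiset.map_map,
      Multiset.prod_map_neg, Multiset.card_map, hf.natDegree_eq_card_roots]
  have hsq : ((-1 : R) ^ f.natDegree) * (-1) ^ f.natDegree = 1 := by
    rw [← mul_pow]; norm_num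
  calc (f.roots.map fun z => 1 - z ^ 2).prod
      = (f.roots.map (1 - ·)).prod * (f.roots.map (1 + ·)).prod := by
        rw [← Multiset.prod_map_mul]; congr! 2 with z; ring
    _ = _ := by
        rw [heval, heval, hneg]
        linear_combination -((f.roots.map (1 - ·)).prod * (f.roots.map (1 + ·)).prod) * hsq

theorem Polynomial.map_conj_roots_eq_roots {P : ℂ[X]} (hP : P.map (starRingEnd ℂ) = P) :
    P.roots.map conj = P.roots := by
  conv_rhs => rw [← hP]
  exact ((IsAlgClosed.splits P).roots_map_of_injective (RingHom.injective _)).symm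

theorem stmt_8_general (p q r : ℤ) (hq : 0 ≤ q) (hr : 1 ≤ r)
    (hcirc : ∀ z : ℂ,
      (X ^ 3 - C (p : ℂ) * X ^ 2 + C (q : ℂ) * X + C (r : ℂ)).IsRoot z →
      ‖z‖ ≠ 1) :
    Multiset.card
        (((X ^ 3 - C (p : ℂ) * X ^ 2 + C (q : ℂ) * X + C (r : ℂ)).roots).filter
          (fun z => ‖z‖ < 1)) = 1 ↔
      |p - r| < q + 1 := by
  set P : ℂ[X] := X ^ 3 - C (p : ℂ) * X ^ 2 + C (q : ℂ) * X + C (r : ℂ) with hP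
  have hsplits : P.Splits := IsAlgClosed.splits P
  have hmonic : P.Monic := by rw [hP]; monicity!
  have hdeg : P.natDegree = 3 := by rw [hP]; compute_degree!
  have hprod : P.roots.prod = -r := by
    have h : P.coeff 0 = r := by simp [hP]
    rw [hsplits.coeff_zero_eq_prod_roots_of_monic hmonic, hdeg] at h
    linear_combination -h
  have hAB : (P.roots.map fun z => 1 - z ^ 2).prod =
      (((1 - p + q + r) * (1 + p + q - r) : ℤ) : ℂ) := by
    rw [hsplits.prod_roots_one_sub_sq_of_monic hmonic, hdeg, hP]
    simp only [eval_add, eval_sub, eval_mul, eval_pow, eval_X, eval_C]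
    push_cast
    ring
  rw [card_filter_norm_lt_one_eq_one_iff_of_card_eq_three
      (hdeg ▸ hsplits.natDegree_eq_card_roots.symm)
      (Polynomial.map_conj_roots_eq_roots (by simp [hP]))
      (by rw [hprod, norm_neg, Complex.norm_intCast]; exact_mod_cast hr.trans (le_abs_self r))
      (fun z hz => hcirc z (isRoot_of_mem_roots hz)),
    hAB, Complex.intCast_re, Int.cast_pos, mul_pos_iff_of_add_pos (by linarith), abs_lt]
  constructor <;> intro h <;> omega

/-- Schur–Cohn criterion for `x³ - p x² + q x + r`: assuming no root on the unit circle,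
exactly one root lies strictly inside the unit circle iff `|p - r| < q + 1`. -/
theorem stmt_8 (p q r : ℤ) (hp : 0 ≤ p) (hq : 0 ≤ q) (hr : 1 ≤ r)
    (hpq : ¬(p = 0 ∧ q = 0))
    (hcirc : ∀ z : ℂ,
      (X ^ 3 - C (p : ℂ) * X ^ 2 + C (q : ℂ) * X + C (r : ℂ)).IsRoot z →
      ‖z‖ ≠ 1) :
    Multiset.card
        (((X ^ 3 - C (p : ℂ) * X ^ 2 + C (q : ℂ) * X + C (r : ℂ)).roots).filter
          (fun z => ‖z‖ < 1)) = 1 ↔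
      |p - r| < q + 1 :=
  stmt_8_general p q r hq hr hcirc
end

section
/- The set of 3×3 matrices with nonnegative integer entries whose characteristic polynomial equals x³ − x − 1 has exactly 6 elements, and any two matrices in this set are conjugate to each other by a permutation matrix (i.e. they form a single orbit under simultaneous permutation of rows and columns). -/
open Matrix Polynomial

/-!
For a nonnegative matrix, trace 0 forces a zero diagonal. The coefficient of `x` then says that
the 2-cycles `M i j * M j i` sum to 1, and `det M = 1` that the two 3-cycles sum to 1. Over the
nonnegative integers this leaves exactly six matrices: the conjugates of the companion matrix of
`x³ - x - 1` by the six permutations of `Fin 3`, which are pairwise distinct.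
-/

theorem Matrix.charpoly_fin_three {R : Type*} [CommRing R] (M : Matrix (Fin 3) (Fin 3) R) :
    M.charpoly = X ^ 3 - C M.trace * X ^ 2
      + C (M 0 0 * M 1 1 - M 0 1 * M 1 0 + M 0 0 * M 2 2 - M 0 2 * M 2 0
        + M 1 1 * M 2 2 - M 1 2 * M 2 1) * X - C M.det := by
  rw [Matrix.charpoly, det_fin_three, det_fin_three, trace_fin_three]
  simp only [charmatrix_apply_eq, charmatrix_apply_ne, ne_eq, Fin.reduceEq, not_false_eq_true,
    map_add, map_sub, map_mul]
  ring

theorem Matrix.charpoly_submatrix_perm {n R : Type*} [Fintype n] [DecidableEq n] [CommRing R]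
    (M : Matrix n n R) (σ : Equiv.Perm n) : (M.submatrix σ σ).charpoly = M.charpoly :=
  charpoly_reindex σ.symm M

theorem Polynomial.coeffs_eq_of_cubic_eq {R : Type*} [CommRing R] {a b c a' b' c' : R}
    (h : X ^ 3 - C a * X ^ 2 + C b * X - C c = X ^ 3 - C a' * X ^ 2 + C b' * X - C c') :
    a = a' ∧ b = b' ∧ c = c' := by
  refine ⟨?_, ?_, ?_⟩
  · simpa [coeff_X] using congrArg (coeff · 2) h
  · simpa [coeff_X] using congrArg (coeff · 1) h
  · simpa [coeff_X] using congrArg (coeff · 0) h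

theorem Matrix.diag_eq_zero_of_nonneg_of_trace_eq_zero {n R : Type*} [Fintype n]
    [AddCommMonoid R] [PartialOrder R] [IsOrderedAddMonoid R] {M : Matrix n n R}
    (h0 : ∀ i, 0 ≤ M i i) (ht : M.trace = 0) (i : n) : M i i = 0 :=
  (Finset.sum_eq_zero_iff_of_nonneg fun i _ ↦ h0 i).mp ht i (Finset.mem_univ i)

theorem Int.cases_of_cycle_sums_eq_one {m01 m02 m10 m12 m20 m21 : ℤ}
    (h01 : 0 ≤ m01) (h02 : 0 ≤ m02) (h10 : 0 ≤ m10) (h12 : 0 ≤ m12) (h20 : 0 ≤ m20)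
    (h21 : 0 ≤ m21) (h2 : m01 * m10 + m02 * m20 + m12 * m21 = 1)
    (h3 : m01 * m12 * m20 + m02 * m10 * m21 = 1) :
    (m01 = 1 ∧ m02 = 0 ∧ m10 = 1 ∧ m12 = 1 ∧ m20 = 1 ∧ m21 = 0) ∨
    (m01 = 1 ∧ m02 = 1 ∧ m10 = 1 ∧ m12 = 0 ∧ m20 = 0 ∧ m21 = 1) ∨
    (m01 = 1 ∧ m02 = 1 ∧ m10 = 0 ∧ m12 = 1 ∧ m20 = 1 ∧ m21 = 0) ∨
    (m01 = 0 ∧ m02 = 1 ∧ m10 = 1 ∧ m12 = 0 ∧ m20 = 1 ∧ m21 = 1) ∨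
    (m01 = 1 ∧ m02 = 0 ∧ m10 = 0 ∧ m12 = 1 ∧ m20 = 1 ∧ m21 = 1) ∨
    (m01 = 0 ∧ m02 = 1 ∧ m10 = 1 ∧ m12 = 1 ∧ m20 = 0 ∧ m21 = 1) := by
  lift m01 to ℕ using h01
  lift m02 to ℕ using h02
  lift m10 to ℕ using h10
  lift m12 to ℕ using h12
  lift m20 to ℕ using h20
  lift m21 to ℕ using h21
  norm_cast at h2 h3 ⊢
  -- One 3-cycle has all three entries equal to 1, the other contains a zero entry.
  rcases Nat.add_eq_one_iff.mp h3 with ⟨hzero, hone⟩ | ⟨hone, hzero⟩ <;>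
    obtain ⟨⟨rfl, rfl⟩, rfl⟩ := mul_eq_one.mp hone |>.imp_left mul_eq_one.mp <;>
    simp only [mul_one, one_mul, mul_eq_zero] at hzero h2 <;>
    omega

-- The companion matrix of `X ^ 3 - X - 1`.
def companionCubic : Matrix (Fin 3) (Fin 3) ℤ := !![0, 0, 1; 1, 0, 1; 0, 1, 0]

theorem companionCubic_nonneg : ∀ i j, 0 ≤ companionCubic i j := by
  simp [companionCubic, Fin.forall_fin_succ]

theorem charpoly_companionCubic : companionCubic.charpoly = X ^ 3 - X - 1 := by
  rw [charpoly_fin_three, trace_fin_three, det_fin_three]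
  simp [companionCubic, sub_eq_add_neg]

theorem submatrix_companionCubic_injective :
    Function.Injective fun σ : Equiv.Perm (Fin 3) ↦ companionCubic.submatrix σ σ := by
  decide

theorem mem_range_submatrix_companionCubic {M : Matrix (Fin 3) (Fin 3) ℤ}
    (h0 : ∀ i j, 0 ≤ M i j) (hcp : M.charpoly = X ^ 3 - X - 1) :
    M ∈ Set.range fun σ : Equiv.Perm (Fin 3) ↦ companionCubic.submatrix σ σ := by
  obtain ⟨htrace, hminors, hdet⟩ := coeffs_eq_of_cubic_eq (a' := 0) (b' := -1) (c' := 1) <| by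
    rw [← charpoly_fin_three, hcp, map_zero, map_neg, map_one]
    ring
  have hdiag := diag_eq_zero_of_nonneg_of_trace_eq_zero (fun i ↦ h0 i i) htrace
  rw [det_fin_three] at hdet
  simp only [hdiag, zero_mul, mul_zero, zero_sub, zero_add, sub_zero] at hminors hdet
  rcases Int.cases_of_cycle_sums_eq_one (h0 0 1) (h0 0 2) (h0 1 0) (h0 1 2) (h0 2 0) (h0 2 1)
      (by linarith) (by linarith) with
    ⟨e01, e02, e10, e12, e20, e21⟩ | ⟨e01, e02, e10, e12, e20, e21⟩ |
    ⟨e01, e02, e10, e12, e20, e21⟩ | ⟨e01, e02, e10, e12, e20, e21⟩ |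
    ⟨e01, e02, e10, e12, e20, e21⟩ | ⟨e01, e02, e10, e12, e20, e21⟩ <;>
  · rw [eta_fin_three M, hdiag 0, hdiag 1, hdiag 2, e01, e02, e10, e12, e20, e21]
    decide

theorem setOf_nonneg_charpoly_eq_range :
    {M : Matrix (Fin 3) (Fin 3) ℤ | (∀ i j, 0 ≤ M i j) ∧ M.charpoly = X ^ 3 - X - 1} =
      Set.range fun σ : Equiv.Perm (Fin 3) ↦ companionCubic.submatrix σ σ := by
  ext M
  constructor
  · rintro ⟨h0, hcp⟩
    exact mem_range_submatrix_companionCubic h0 hcp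
  · rintro ⟨σ, rfl⟩
    exact ⟨fun i j ↦ companionCubic_nonneg _ _, by
      rw [charpoly_submatrix_perm, charpoly_companionCubic]⟩

/-- There are exactly 6 nonnegative integer `3 × 3` matrices with characteristic
polynomial `x³ - x - 1`, and they form a single orbit under simultaneous permutation
of rows and columns (i.e. conjugation by permutation matrices). -/
theorem stmt_11 (S : Set (Matrix (Fin 3) (Fin 3) ℤ))
    (hS : S = {M : Matrix (Fin 3) (Fin 3) ℤ | (∀ i j, 0 ≤ M i j) ∧
      M.charpoly = X ^ 3 - X - 1}) :
    S.ncard = 6 ∧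
      ∀ M ∈ S, ∀ N ∈ S, ∃ σ : Equiv.Perm (Fin 3), N = M.submatrix σ σ := by
  rw [hS, setOf_nonneg_charpoly_eq_range]
  refine ⟨?_, ?_⟩
  · rw [Set.ncard_range_of_injective submatrix_companionCubic_injective, Nat.card_perm]
    simp [Nat.factorial]
  · rintro _ ⟨σ, rfl⟩ _ ⟨τ, rfl⟩
    exact ⟨σ⁻¹ * τ, by simp [submatrix_submatrix, Function.comp_def]⟩
end

section
/- Let q, r be integers and suppose the polynomial x³ − q x − r has a real root β > 1 while its other two complex roots both have modulus strictly less than 1. Then q = 1 and r = 1 (so β is the root of x³ − x − 1, the smallest Pisot number). -/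
/-!
Factor the cubic as `(x - β)(x - z)(x - w)` with `‖z‖, ‖w‖ < 1`. Since the `x²` coefficient
vanishes, `z + w = -β`, so `z` and `w` have opposite imaginary parts and `β < 2`. For real `x`
with `|x| ≥ 1` this gives `Re((x - z)(x - w)) > 0`, and the cubic, being real on the reals,
equals `(x - β) Re((x - z)(x - w))` there; so it is negative at `x = ±1`, i.e. `q + r ≥ 2` and
`r ≥ q`. Together with `|r| = β ‖z‖ ‖w‖ < 2` this forces `r = 1`, and then `q = 1`.
-/

open Polynomial

theorem exists_roots_erase_eq_pair {K : Type*} [Field K] [IsAlgClosed K] [DecidableEq K]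
    {P : K[X]} (hP : P.Monic) (hdeg : P.natDegree = 3) {a : K} (ha : a ∈ P.roots) :
    ∃ b c : K, P.roots.erase a = {b, c} ∧ P = (X - C a) * (X - C b) * (X - C c) := by
  have hcard : Multiset.card P.roots = P.natDegree :=
    splits_iff_card_roots.mp (IsAlgClosed.splits P)
  obtain ⟨b, c, hbc⟩ : ∃ b c, P.roots.erase a = {b, c} := by
    apply Multiset.card_eq_two.mp
    rw [Multiset.card_erase_of_mem ha, hcard, hdeg]
    rfl
  refine ⟨b, c, hbc, ?_⟩
  have hroots : P.roots = a ::ₘ {b, c} := by rw [← hbc, Multiset.cons_erase ha]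
  rw [← prod_multiset_X_sub_C_of_monic_of_roots_card_eq hP hcard, hroots]
  simp [mul_assoc]

theorem Complex.re_sub_mul_sub_pos {x : ℝ} (hx : 1 ≤ |x|) {z w : ℂ} (hz : ‖z‖ < 1)
    (hw : ‖w‖ < 1) (him : z.im + w.im = 0) : 0 < ((x - z) * (x - w)).re := by
  have hre : ((x - z) * (x - w)).re = (x - z.re) * (x - w.re) + z.im ^ 2 := by
    simp only [mul_re, sub_re, sub_im, ofReal_re, ofReal_im]
    linear_combination (-z.im) * him
  have hzre := abs_lt.mp ((abs_re_le_norm z).trans_lt hz)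
  have hwre := abs_lt.mp ((abs_re_le_norm w).trans_lt hw)
  rw [hre]
  rcases le_abs'.mp hx with hx | hx
  · nlinarith [mul_pos (sub_pos.mpr (hx.trans_lt hzre.1)) (sub_pos.mpr (hx.trans_lt hwre.1)),
      sq_nonneg z.im]
  · nlinarith [mul_pos (sub_pos.mpr (hzre.2.trans_le hx)) (sub_pos.mpr (hwre.2.trans_le hx)),
      sq_nonneg z.im]

theorem eq_one_of_trinomial_eq_mul {q r : ℤ} {β : ℝ} (hβ : 1 < β) {z w : ℂ} (hz : ‖z‖ < 1)
    (hw : ‖w‖ < 1) (h : ∀ x : ℂ, x ^ 3 - q * x - r = (x - β) * ((x - z) * (x - w))) :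
    q = 1 ∧ r = 1 := by
  have hsum : z + w = -β := by linear_combination (h 1 + h (-1)) / 2 - h 0
  have hβ2 : β < 2 := by
    have := norm_add_le z w
    rw [hsum, norm_neg, Complex.norm_real, Real.norm_of_nonneg (by linarith)] at this
    linarith
  have hr : |(r : ℝ)| < 2 := by
    have hr : (r : ℂ) = β * (z * w) := by linear_combination -h 0
    have hzw : ‖z‖ * ‖w‖ < 1 := by nlinarith [norm_nonneg z, norm_nonneg w]
    have := congrArg norm hr
    rw [norm_mul, norm_mul, Complex.norm_real, Complex.norm_intCast,
      Real.norm_of_nonneg (by linarith)] at this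
    nlinarith
  have hval (x : ℝ) : x ^ 3 - q * x - r = (x - β) * ((x - z) * (x - w)).re := by
    have e : ((x ^ 3 - q * x - r : ℝ) : ℂ) = ((x - β : ℝ) : ℂ) * ((x - z) * (x - w)) := by
      push_cast
      exact h x
    simpa only [Complex.ofReal_re, Complex.re_ofReal_mul] using congrArg Complex.re e
  have him : z.im + w.im = 0 := by simpa using congrArg Complex.im hsum
  have hneg (x : ℝ) (hx : 1 ≤ |x|) (hxβ : x < β) : x ^ 3 - q * x - r < 0 := by
    rw [hval x]
    exact mul_neg_of_neg_of_pos (by linarith) (Complex.re_sub_mul_sub_pos hx hz hw him)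
  have h1 := hneg 1 (by norm_num) hβ
  have h2 := hneg (-1) (by norm_num) (by linarith)
  norm_num at h1 h2
  have hqr : 1 < q + r := by exact_mod_cast (by linarith : (1 : ℝ) < q + r)
  have hrq : q < r + 1 := by exact_mod_cast (by linarith : (q : ℝ) < r + 1)
  have hr2 : r < 2 := by exact_mod_cast (le_abs_self (r : ℝ)).trans_lt hr
  omega

/-- If `x³ - q x - r` (for integers `q, r`) has a real root `β > 1` and its other two
complex roots both have modulus less than `1`, then `q = 1` and `r = 1`, i.e. `β` is
the smallest Pisot number, the root of `x³ - x - 1`. -/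
theorem stmt_13 (q r : ℤ) (β : ℝ) (hβ : 1 < β)
    (hroot : (β : ℂ) ∈ (X ^ 3 - C (q : ℂ) * X - C (r : ℂ)).roots)
    (hothers : ∀ z ∈ ((X ^ 3 - C (q : ℂ) * X - C (r : ℂ)).roots).erase (β : ℂ),
      ‖z‖ < 1) :
    q = 1 ∧ r = 1 := by
  set P : ℂ[X] := X ^ 3 - C (q : ℂ) * X - C (r : ℂ) with hP
  have hmonic : P.Monic := by
    rw [hP, sub_sub]
    exact monic_X_pow_sub (by compute_degree!)
  have hdeg : P.natDegree = 3 := by rw [hP]; compute_degree!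
  obtain ⟨z, w, hzw, hfac⟩ := exists_roots_erase_eq_pair hmonic hdeg hroot
  refine eq_one_of_trinomial_eq_mul hβ (hothers z (by simp [hzw])) (hothers w (by simp [hzw]))
    fun x => ?_
  simpa [hP, mul_assoc] using congrArg (eval x) hfac
end
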